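/- arXiv:1801.02845 — 4 statements merged into one kernel-verified Lean document; each statement's English description precedes it below -/
import Mathlib

section
/- Let n ≥ 2 be an integer, let λ = (λ_1 ≥ … ≥ λ_k ≥ 0) be an n-periodic partition, and for each residue class r modulo n let c_r be a complex sequence. Then the polynomial τ(t) = det( s_{λ_i + j − i}( t + c_{(λ_i − i + 1) mod n} ) )_{1 ≤ i, j ≤ k} satisfies ∂τ/∂t_{pn} = 0 for every integer p ≥ 1. -/
open MvPolynomial

/-- The elementary Schur polynomial `s_n(t)` in variables `t = (t_1, t_2, …)`, where the
variable `X k` of `MvPolynomial ℕ ℂ` stands for `t_{k+1}`.  It is the coefficient of `z^n` in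
`exp (∑_{k ≥ 1} t_k z^k)`; only the terms `t_1 z, …, t_n z^n` and the powers `m ≤ n` of the
exponential series contribute to this coefficient. -/
noncomputable def schur (n : ℕ) : MvPolynomial ℕ ℂ :=
  ∑ m ∈ Finset.range (n + 1), (m.factorial : ℂ)⁻¹ •
    (PowerSeries.coeff (R := MvPolynomial ℕ ℂ) n)
      ((∑ k ∈ Finset.range n,
        PowerSeries.monomial (R := MvPolynomial ℕ ℂ) (k + 1) (MvPolynomial.X k)) ^ m)

/-- `s_j` for `j ∈ ℤ`, with `s_j = 0` for `j < 0`. -/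
noncomputable def schurZ (j : ℤ) : MvPolynomial ℕ ℂ :=
  if 0 ≤ j then schur j.toNat else 0

/-- `s_j(t + c)`: the elementary Schur polynomial with argument shifted by the complex
sequence `c` (where `c k` stands for `c_{k+1}`). -/
noncomputable def schurShift (j : ℤ) (c : ℕ → ℂ) : MvPolynomial ℕ ℂ :=
  MvPolynomial.aeval (fun k : ℕ => MvPolynomial.X k + MvPolynomial.C (c k)) (schurZ j)

/-- `τ(t - [z⁻¹])` as a polynomial in `w = z⁻¹` with coefficients in the ring
`ℂ[t, y] = MvPolynomial (ℕ ⊕ ℕ) ℂ` (the `Sum.inl` variables are the `t`'s, the `Sum.inr`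
variables are the `y`'s): substitute `t_i - w^i / i` for `t_i`. -/
noncomputable def tSub (τ : MvPolynomial ℕ ℂ) : Polynomial (MvPolynomial (ℕ ⊕ ℕ) ℂ) :=
  MvPolynomial.aeval (fun k : ℕ =>
    Polynomial.C (MvPolynomial.X (Sum.inl k)) -
      Polynomial.C (MvPolynomial.C ((k + 1 : ℂ)⁻¹)) * Polynomial.X ^ (k + 1 : ℕ)) τ

/-- `τ(y + [z⁻¹])` as a polynomial in `w = z⁻¹`: substitute `y_i + w^i / i` for `t_i`. -/
noncomputable def ySub (τ : MvPolynomial ℕ ℂ) : Polynomial (MvPolynomial (ℕ ⊕ ℕ) ℂ) :=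
  MvPolynomial.aeval (fun k : ℕ =>
    Polynomial.C (MvPolynomial.X (Sum.inr k)) +
      Polynomial.C (MvPolynomial.C ((k + 1 : ℂ)⁻¹)) * Polynomial.X ^ (k + 1 : ℕ)) τ

/-- `s_n(t - y)` in `ℂ[t, y]`. -/
noncomputable def expFactor (n : ℕ) : MvPolynomial (ℕ ⊕ ℕ) ℂ :=
  MvPolynomial.aeval (fun k : ℕ => MvPolynomial.X (Sum.inl k) - MvPolynomial.X (Sum.inr k))
    (schur n)

/-- The pair `(τ', τ)` satisfies the `m`-th modified KP bilinear identity: the coefficient of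
`z^{-1}` in `z^m · τ'(t - [z⁻¹]) · τ(y + [z⁻¹]) · exp (∑ (t_i - y_i) z^i)` vanishes.
Writing `P(w) = τ'(t - [z⁻¹]) · τ(y + [z⁻¹])` as a polynomial in `w = z⁻¹` and
`exp (∑ (t_i - y_i) z^i) = ∑_{n ≥ 0} s_n(t - y) z^n`, this coefficient is the (finite) sum
`∑_{n ≥ 0} s_n(t - y) · P.coeff (n + m + 1)`; all terms with `n > P.natDegree` vanish. -/
def MKPPair (m : ℕ) (τ' τ : MvPolynomial ℕ ℂ) : Prop :=
  ∑ n ∈ Finset.range ((tSub τ' * ySub τ).natDegree + 1),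
    expFactor n * (tSub τ' * ySub τ).coeff (n + m + 1) = 0

/-- `τ` is a tau-function of the KP hierarchy. -/
def IsKPTau (τ : MvPolynomial ℕ ℂ) : Prop := MKPPair 0 τ τ

/-- `τ_λ(t; c_1, …, c_k) = det (s_{λ_i + j - i}(t + c_i))_{1 ≤ i,j ≤ k}` (0-based indices:
the `(i,j)` entry is `s_{λ_{i+1} + (j+1) - (i+1)}(t + c_{i+1})`). -/
noncomputable def tauLambda (k : ℕ) (lam : Fin k → ℕ) (c : Fin k → ℕ → ℂ) :
    MvPolynomial ℕ ℂ :=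
  Matrix.det (Matrix.of fun i j : Fin k =>
    schurShift ((lam i : ℤ) + (j : ℕ) - (i : ℕ)) (c i))

/-- The `t_1`-Wronskian `det (∂^{i-1} f_j / ∂t_1^{i-1})` of a finite family of polynomials. -/
noncomputable def wronskianFin (k : ℕ) (f : Fin k → MvPolynomial ℕ ℂ) : MvPolynomial ℕ ℂ :=
  Matrix.det (Matrix.of fun i j : Fin k =>
    (fun p => MvPolynomial.pderiv 0 p)^[(i : ℕ)] (f j))

/-- The `t_1`-Wronskian of a list of polynomials, in the order of the list. -/
noncomputable def wronskianList (L : List (MvPolynomial ℕ ℂ)) : MvPolynomial ℕ ℂ :=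
  wronskianFin L.length fun j => L.get j

/-- The set `V_λ = {λ_i - i + 1 : 1 ≤ i ≤ k} ∪ {-k, -k-1, -k-2, …} ⊆ ℤ` attached to a
partition (0-based: `λ_{i+1} - (i+1) + 1 = lam i - i`). -/
def VSet (k : ℕ) (lam : Fin k → ℕ) : Set ℤ :=
  {j | (∃ i : Fin k, j = (lam i : ℤ) - (i : ℕ)) ∨ j ≤ -(k : ℤ)}

/-- A partition is `n`-periodic if `V_λ` is closed under subtracting `n`. -/
def NPeriodic (n k : ℕ) (lam : Fin k → ℕ) : Prop :=
  ∀ j ∈ VSet k lam, j - (n : ℤ) ∈ VSet k lam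

/-- `det (s_{λ_i + j - i}(t + c_{(λ_i - i + 1) mod n}))_{1 ≤ i,j ≤ k}`, where the shift
sequences are indexed by the residues modulo `n`. -/
noncomputable def tauLambdaMod (n k : ℕ) (lam : Fin k → ℕ) (c : ZMod n → ℕ → ℂ) :
    MvPolynomial ℕ ℂ :=
  Matrix.det (Matrix.of fun i j : Fin k =>
    schurShift ((lam i : ℤ) + (j : ℕ) - (i : ℕ))
      (c ((((lam i : ℤ) - (i : ℕ)) : ℤ) : ZMod n)))





/-- full generating series ∑_{k≥0} X k · z^{k+1} -/
noncomputable def Efull : PowerSeries (MvPolynomial ℕ ℂ) :=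
  PowerSeries.mk fun d => if d = 0 then 0 else MvPolynomial.X (d - 1)

lemma coeff_Efull (d : ℕ) :
    PowerSeries.coeff (R := MvPolynomial ℕ ℂ) d Efull = if d = 0 then 0 else MvPolynomial.X (d - 1) :=
  PowerSeries.coeff_mk _ _

lemma coeff_Efull_pow_eq_zero : ∀ m n : ℕ, n < m → PowerSeries.coeff (R := MvPolynomial ℕ ℂ) n (Efull ^ m) = 0 := by
  intro m
  induction m with
  | zero => omega
  | succ m ih =>
    intro n hn
    rw [pow_succ', PowerSeries.coeff_mul]
    apply Finset.sum_eq_zero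
    rintro ⟨a, b⟩ hab
    rw [Finset.HasAntidiagonal.mem_antidiagonal] at hab
    rcases Nat.eq_zero_or_pos a with ha | ha
    · simp [ha, coeff_Efull]
    · have : b < m := by omega
      simp [ih b this]

/-- two series agreeing up to n have powers agreeing up to n -/
lemma coeff_pow_congr (f g : PowerSeries (MvPolynomial ℕ ℂ)) (n : ℕ)
    (h : ∀ j ≤ n, PowerSeries.coeff (R := MvPolynomial ℕ ℂ) j f = PowerSeries.coeff (R := MvPolynomial ℕ ℂ) j g) :
    ∀ m, ∀ j ≤ n, PowerSeries.coeff (R := MvPolynomial ℕ ℂ) j (f ^ m) = PowerSeries.coeff (R := MvPolynomial ℕ ℂ) j (g ^ m) := by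
  intro m
  induction m with
  | zero => intro j _; rfl
  | succ m ih =>
    intro j hj
    rw [pow_succ, pow_succ, PowerSeries.coeff_mul, PowerSeries.coeff_mul]
    refine Finset.sum_congr rfl ?_
    rintro ⟨a, b⟩ hab
    rw [Finset.HasAntidiagonal.mem_antidiagonal] at hab
    rw [ih a (by omega), h b (by omega)]

lemma schur_eq (N : ℕ) :
    schur N = ∑ m ∈ Finset.range (N + 1),
      (Nat.factorial m : ℂ)⁻¹ • PowerSeries.coeff (R := MvPolynomial ℕ ℂ) N (Efull ^ m) := by
  unfold schur
  refine Finset.sum_congr rfl fun m _ => ?_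
  congr 1
  refine coeff_pow_congr _ _ N (fun j hj => ?_) m N le_rfl
  rw [map_sum, coeff_Efull]
  rcases Nat.eq_zero_or_pos j with hj0 | hj0
  · subst hj0
    simp [PowerSeries.coeff_monomial]
  · rw [if_neg (by omega)]
    rw [Finset.sum_eq_single (j - 1)]
    · rw [PowerSeries.coeff_monomial, if_pos (by omega)]
    · intro k _ hk
      rw [PowerSeries.coeff_monomial, if_neg (by omega)]
    · intro h
      simp only [Finset.mem_range] at h
      omega
/-- coefficientwise partial derivative of a power series -/
noncomputable def cD (r : ℕ) (f : PowerSeries (MvPolynomial ℕ ℂ)) :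
    PowerSeries (MvPolynomial ℕ ℂ) :=
  PowerSeries.mk fun d => MvPolynomial.pderiv r (PowerSeries.coeff d f)

lemma coeff_cD (r d : ℕ) (f) :
    PowerSeries.coeff (R := MvPolynomial ℕ ℂ) d (cD r f)
      = MvPolynomial.pderiv r (PowerSeries.coeff d f) :=
  PowerSeries.coeff_mk _ _

lemma cD_mul (r : ℕ) (f g : PowerSeries (MvPolynomial ℕ ℂ)) :
    cD r (f * g) = cD r f * g + f * cD r g := by
  refine PowerSeries.ext fun d => ?_
  rw [coeff_cD, PowerSeries.coeff_mul, map_sum, map_add, PowerSeries.coeff_mul,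
    PowerSeries.coeff_mul, ← Finset.sum_add_distrib]
  refine Finset.sum_congr rfl fun ab _ => ?_
  rw [pderiv_mul, coeff_cD, coeff_cD]

lemma cD_Efull (r : ℕ) : cD r Efull = PowerSeries.X ^ (r + 1) := by
  refine PowerSeries.ext fun d => ?_
  rw [coeff_cD, coeff_Efull, PowerSeries.coeff_X_pow]
  rcases Nat.eq_zero_or_pos d with h0 | h0
  · simp [h0]
  · rw [if_neg (by omega)]
    rw [show MvPolynomial.X (d-1) = (MvPolynomial.X (d-1) : MvPolynomial ℕ ℂ) from rfl,
      MvPolynomial.pderiv_X, Pi.single_apply]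
    by_cases h : d = r + 1
    · rw [if_pos (by omega), if_pos h]
    · rw [if_neg (by omega), if_neg h]

lemma cD_Efull_pow (r m : ℕ) :
    cD r (Efull ^ (m + 1)) = (m + 1) • (PowerSeries.X ^ (r + 1) * Efull ^ m) := by
  induction m with
  | zero => simp [cD_Efull, cD_mul]
  | succ m ih =>
    rw [pow_succ', cD_mul, ih, cD_Efull, pow_succ']
    simp only [nsmul_eq_mul]
    push_cast
    ring

lemma pderiv_schur_aux (r N : ℕ) :
    MvPolynomial.pderiv r (schur N) =
      ∑ m ∈ Finset.range N, (Nat.factorial m : ℂ)⁻¹ •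
        (if r + 1 ≤ N then PowerSeries.coeff (R := MvPolynomial ℕ ℂ) (N - (r + 1)) (Efull ^ m)
         else 0) := by
  rw [schur_eq, map_sum]
  rw [Finset.sum_range_succ']
  have h0 : MvPolynomial.pderiv r ((Nat.factorial 0 : ℂ)⁻¹ •
      PowerSeries.coeff (R := MvPolynomial ℕ ℂ) N (Efull ^ 0)) = 0 := by
    rcases Nat.eq_zero_or_pos N with h | h
    · subst h; simp
    · rw [pow_zero, PowerSeries.coeff_one, if_neg (by omega)]
      simp
  rw [h0, add_zero]
  refine Finset.sum_congr rfl fun m _ => ?_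
  rw [Derivation.map_smul, ← coeff_cD, cD_Efull_pow, map_nsmul, PowerSeries.coeff_X_pow_mul',
    ← Nat.cast_smul_eq_nsmul ℂ, smul_smul]
  congr 1
  have hf : (((m+1).factorial : ℕ) : ℂ) = ((m:ℂ) + 1) * ((m.factorial : ℕ) : ℂ) := by
    push_cast [Nat.factorial_succ]; ring
  have h1 : ((m:ℂ) + 1) ≠ 0 := Nat.cast_add_one_ne_zero m
  have h2 : ((m.factorial : ℕ) : ℂ) ≠ 0 := Nat.cast_ne_zero.mpr m.factorial_ne_zero
  push_cast [hf]
  field_simp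

lemma pderiv_schur_of_le (r N : ℕ) (h : r + 1 ≤ N) :
    MvPolynomial.pderiv r (schur N) = schur (N - (r + 1)) := by
  rw [pderiv_schur_aux, schur_eq]
  simp only [if_pos h]
  symm
  apply Finset.sum_subset
  · intro x hx
    simp only [Finset.mem_range] at *
    omega
  · intro x _ hx
    simp only [Finset.mem_range] at hx
    rw [coeff_Efull_pow_eq_zero x (N - (r+1)) (by omega), smul_zero]

lemma pderiv_schur_of_lt (r N : ℕ) (h : N < r + 1) :
    MvPolynomial.pderiv r (schur N) = 0 := by
  rw [pderiv_schur_aux]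
  simp [Nat.not_le.mpr h]
lemma pderiv_aeval_shift (r : ℕ) (c : ℕ → ℂ) (q : MvPolynomial ℕ ℂ) :
    MvPolynomial.pderiv r
        (MvPolynomial.aeval (fun k : ℕ => MvPolynomial.X k + MvPolynomial.C (c k)) q)
      = MvPolynomial.aeval (fun k : ℕ => MvPolynomial.X k + MvPolynomial.C (c k))
          (MvPolynomial.pderiv r q) := by
  induction q using MvPolynomial.induction_on with
  | C a => simp
  | add p q hp hq => simp only [map_add, hp, hq]
  | mul_X p i hp =>
    simp only [map_mul, pderiv_mul, MvPolynomial.aeval_X, map_add, hp, MvPolynomial.pderiv_X,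
      Pi.single_apply]
    by_cases h : i = r <;> simp [h]

lemma pderiv_schurShift (r : ℕ) (j : ℤ) (c : ℕ → ℂ) :
    MvPolynomial.pderiv r (schurShift j c) = schurShift (j - (r + 1 : ℕ)) c := by
  unfold schurShift
  rw [pderiv_aeval_shift]
  congr 1
  unfold schurZ
  rcases lt_or_ge j 0 with hj | hj
  · rw [if_neg (by omega), if_neg (by omega), map_zero]
  · rw [if_pos hj]
    rcases le_or_gt ((r : ℤ) + 1) j with h | h
    · rw [if_pos (by omega)]
      rw [pderiv_schur_of_le r j.toNat (by omega)]
      congr 1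
      omega
    · rw [if_neg (by omega)]
      exact pderiv_schur_of_lt r j.toNat (by omega)

lemma schurShift_neg (j : ℤ) (hj : j < 0) (c : ℕ → ℂ) : schurShift j c = 0 := by
  unfold schurShift schurZ
  rw [if_neg (by omega), map_zero]
lemma pderiv_prod (r : ℕ) {ι : Type*} [DecidableEq ι] (s : Finset ι)
    (f : ι → MvPolynomial ℕ ℂ) :
    MvPolynomial.pderiv r (∏ i ∈ s, f i)
      = ∑ i ∈ s, MvPolynomial.pderiv r (f i) * ∏ j ∈ s.erase i, f j := by
  induction s using Finset.induction_on with
  | empty => simp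
  | insert a s ha ih =>
    rw [Finset.prod_insert ha, pderiv_mul, ih, Finset.sum_insert ha,
      Finset.erase_insert ha, Finset.mul_sum]
    congr 1
    refine Finset.sum_congr rfl fun i hi => ?_
    rw [Finset.erase_insert_of_ne (by rintro rfl; exact ha hi),
      Finset.prod_insert (fun h => ha (Finset.mem_of_mem_erase h))]
    ring

lemma pderiv_det_col (r : ℕ) {k : ℕ} (M : Matrix (Fin k) (Fin k) (MvPolynomial ℕ ℂ)) :
    MvPolynomial.pderiv r M.det
      = ∑ j : Fin k, (M.updateCol j (fun i => MvPolynomial.pderiv r (M i j))).det := by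
  simp only [Matrix.det_apply']
  rw [map_sum, Finset.sum_comm]
  refine Finset.sum_congr rfl fun σ _ => ?_
  have hε : ∀ q : MvPolynomial ℕ ℂ, MvPolynomial.pderiv r
      (((Equiv.Perm.sign σ : ℤ) : MvPolynomial ℕ ℂ) * q)
      = ((Equiv.Perm.sign σ : ℤ) : MvPolynomial ℕ ℂ) * MvPolynomial.pderiv r q := by
    intro q
    rw [pderiv_mul]
    simp
  rw [hε, pderiv_prod, Finset.mul_sum]
  refine Finset.sum_congr rfl fun j _ => ?_
  congr 1
  rw [← Finset.mul_prod_erase Finset.univ _ (Finset.mem_univ j)]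
  congr 1
  · rw [Matrix.updateCol_apply, if_pos rfl]
  · refine Finset.prod_congr rfl fun i hi => ?_
    rw [Matrix.updateCol_apply, if_neg (Finset.ne_of_mem_erase hi)]

lemma pderiv_det_row (r : ℕ) {k : ℕ} (M : Matrix (Fin k) (Fin k) (MvPolynomial ℕ ℂ)) :
    MvPolynomial.pderiv r M.det
      = ∑ i : Fin k, (M.updateRow i (fun j => MvPolynomial.pderiv r (M i j))).det := by
  rw [← Matrix.det_transpose M, pderiv_det_col]
  refine Finset.sum_congr rfl fun i _ => ?_
  rw [← Matrix.det_transpose]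
  congr 1
  ext a b : 1
  by_cases h : a = i
  · subst h
    rw [Matrix.transpose_apply, Matrix.updateCol_apply, Matrix.updateRow_apply]
    simp [Matrix.transpose_apply]
  · rw [Matrix.transpose_apply, Matrix.updateCol_apply, if_neg h,
      Matrix.updateRow_apply, if_neg h, Matrix.transpose_apply]
lemma NPeriodic.iter {n k : ℕ} {lam : Fin k → ℕ} (h : NPeriodic n k lam) (q : ℕ) :
    ∀ j ∈ VSet k lam, j - ((q * n : ℕ) : ℤ) ∈ VSet k lam := by
  induction q with
  | zero => simpa using fun j hj => hj
  | succ q ih =>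
    intro j hj
    have h2 := h _ (ih j hj)
    have : j - (((q + 1) * n : ℕ) : ℤ) = j - ((q * n : ℕ) : ℤ) - (n : ℤ) := by
      push_cast; ring
    rw [this]
    exact h2

/-- For an `n`-periodic partition `λ` and sequences `c_r` indexed by residues mod `n`, the
polynomial `det (s_{λ_i + j - i}(t + c_{(λ_i - i + 1) mod n}))` is annihilated by
`∂/∂t_{pn}` for all `p ≥ 1` (the variable `X (pn - 1)` is `t_{pn}`). -/
theorem tauLambdaMod_pderiv_eq_zero (n : ℕ) (hn : 2 ≤ n) (k : ℕ) (lam : Fin k → ℕ)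
    (hlam : Antitone lam) (hper : NPeriodic n k lam) (c : ZMod n → ℕ → ℂ)
    (p : ℕ) (hp : 1 ≤ p) :
    MvPolynomial.pderiv (p * n - 1) (tauLambdaMod n k lam c) = 0 := by
  have hpn : 1 ≤ p * n := Nat.mul_pos hp (by omega)
  set M : Matrix (Fin k) (Fin k) (MvPolynomial ℕ ℂ) :=
    Matrix.of fun i j : Fin k =>
      schurShift ((lam i : ℤ) + (j : ℕ) - (i : ℕ))
        (c ((((lam i : ℤ) - (i : ℕ)) : ℤ) : ZMod n)) with hM
  rw [tauLambdaMod, ← hM, pderiv_det_row]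
  apply Finset.sum_eq_zero
  intro i _
  have hrow : ∀ j : Fin k,
      MvPolynomial.pderiv (p * n - 1) (M i j)
        = schurShift ((lam i : ℤ) + (j : ℕ) - (i : ℕ) - ((p * n : ℕ) : ℤ))
            (c ((((lam i : ℤ) - (i : ℕ)) : ℤ) : ZMod n)) := by
    intro j
    rw [hM]
    show MvPolynomial.pderiv (p * n - 1)
        (schurShift ((lam i : ℤ) + (j : ℕ) - (i : ℕ))
          (c ((((lam i : ℤ) - (i : ℕ)) : ℤ) : ZMod n))) = _
    rw [pderiv_schurShift]
    congr 1
    omega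
  have hV : ((lam i : ℤ) - (i : ℕ)) - ((p * n : ℕ) : ℤ) ∈ VSet k lam :=
    hper.iter p _ (Or.inl ⟨i, rfl⟩)
  rcases hV with ⟨i', hi'⟩ | hle
  · -- duplicate rows
    have hne : i ≠ i' := by
      rintro rfl
      omega
    apply Matrix.det_zero_of_row_eq hne
    rw [Matrix.updateRow_self, Matrix.updateRow_ne (Ne.symm hne)]
    funext j
    rw [hrow j]
    show _ = schurShift ((lam i' : ℤ) + (j : ℕ) - (i' : ℕ))
        (c ((((lam i' : ℤ) - (i' : ℕ)) : ℤ) : ZMod n))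
    have harg : (lam i : ℤ) + (j : ℕ) - (i : ℕ) - ((p * n : ℕ) : ℤ)
        = (lam i' : ℤ) + (j : ℕ) - (i' : ℕ) := by omega
    have hres : ((((lam i : ℤ) - (i : ℕ)) : ℤ) : ZMod n)
        = ((((lam i' : ℤ) - (i' : ℕ)) : ℤ) : ZMod n) := by
      rw [← hi']
      push_cast
      rw [ZMod.natCast_self]
      ring
    rw [harg, hres]
  · -- zero row
    apply Matrix.det_eq_zero_of_row_eq_zero i
    intro j
    rw [Matrix.updateRow_self, hrow j]
    apply schurShift_neg
    have := j.isLt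
    omega
end

section
/- Crum's identity (Desnanot–Jacobi identity for Wronskians): Let m ≥ 1 and let q_1, …, q_m, f : ℝ → ℂ be smooth functions. Then W(q_1, …, q_m) · (d/dx) W(q_1, …, q_{m−1}, f) − ( (d/dx) W(q_1, …, q_m) ) · W(q_1, …, q_{m−1}, f) = W(q_1, …, q_{m−1}) · W(q_1, …, q_m, f), where the Wronskian of the empty family is 1. -/
open Matrix

/-- The Wronskian `det (d^{i-1} g_j / dx^{i-1})` of a finite family of functions `ℝ → ℂ`,
as a function of `x`; the Wronskian of the empty family is `1`. -/
noncomputable def wrFun (m : ℕ) (g : Fin m → ℝ → ℂ) : ℝ → ℂ :=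
  fun x => Matrix.det (Matrix.of fun i j : Fin m => iteratedDeriv (i : ℕ) (g j) x)

/- ### The adjugate-corner identity -/

private lemma detQ (n : ℕ) (A : Matrix (Fin n ⊕ Fin 2) (Fin n ⊕ Fin 2) ℂ) :
    A.det * (A.adjugate (Sum.inr 0) (Sum.inr 0) * A.adjugate (Sum.inr 1) (Sum.inr 1) -
      A.adjugate (Sum.inr 0) (Sum.inr 1) * A.adjugate (Sum.inr 1) (Sum.inr 0)) =
    A.det ^ 2 * (A.submatrix Sum.inl Sum.inl).det := by
  classical
  set Q : Matrix (Fin 2) (Fin 2) ℂ := Matrix.of fun i j => A.adjugate (Sum.inr i) (Sum.inr j)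
    with hQ
  set P : Matrix (Fin n) (Fin 2) ℂ := Matrix.of fun i j => A.adjugate (Sum.inl i) (Sum.inr j)
    with hP
  set D : Matrix (Fin n ⊕ Fin 2) (Fin n ⊕ Fin 2) ℂ := Matrix.fromBlocks 1 P 0 Q with hD
  have hadj := Matrix.mul_adjugate A
  have hAD : A * D = Matrix.fromBlocks (A.submatrix Sum.inl Sum.inl) 0
      (A.submatrix Sum.inr Sum.inl) (A.det • 1) := by
    ext i j
    cases j with
    | inl j =>
      cases i with
      | inl i =>
        simp [hD, Matrix.mul_apply, Fintype.sum_sum_type, Matrix.one_apply, mul_ite]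
      | inr i =>
        simp [hD, Matrix.mul_apply, Fintype.sum_sum_type, Matrix.one_apply, mul_ite]
    | inr j =>
      have h2 : (A * D) i (Sum.inr j) = (A * A.adjugate) i (Sum.inr j) := by
        simp [hD, hP, hQ, Matrix.mul_apply, Fintype.sum_sum_type]
      rw [h2, hadj]
      cases i with
      | inl i => simp [Matrix.one_apply]
      | inr i => simp [Matrix.one_apply]
  have h1 : (A * D).det = (A.submatrix Sum.inl Sum.inl).det * (A.det ^ 2) := by
    rw [hAD, Matrix.det_fromBlocks_zero₁₂]
    congr 1
    rw [Matrix.det_smul, Matrix.det_one, mul_one]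
    simp
  have h2 : D.det = Q.det := by
    rw [hD, Matrix.det_fromBlocks_zero₂₁, Matrix.det_one, one_mul]
  have h3 : A.det * D.det = (A * D).det := (Matrix.det_mul A D).symm
  have hQdet : Q.det = Q 0 0 * Q 1 1 - Q 0 1 * Q 1 0 := Matrix.det_fin_two Q
  have hQe : ∀ i j, Q i j = A.adjugate (Sum.inr i) (Sum.inr j) := fun i j => rfl
  calc A.det * (A.adjugate (Sum.inr 0) (Sum.inr 0) * A.adjugate (Sum.inr 1) (Sum.inr 1) -
      A.adjugate (Sum.inr 0) (Sum.inr 1) * A.adjugate (Sum.inr 1) (Sum.inr 0))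
      = A.det * Q.det := by rw [hQdet, hQe, hQe, hQe, hQe]
    _ = A.det * D.det := by rw [h2]
    _ = (A * D).det := h3
    _ = A.det ^ 2 * (A.submatrix Sum.inl Sum.inl).det := by rw [h1]; ring

/- ### Desnanot–Jacobi, invertible case -/

private lemma dj_unit (n : ℕ) (A : Matrix (Fin (n + 2)) (Fin (n + 2)) ℂ) (hA : A.det ≠ 0) :
    (A.submatrix (Fin.last (n + 1)).succAbove (Fin.last (n + 1)).succAbove).det *
      (A.submatrix (⟨n, by omega⟩ : Fin (n + 2)).succAbove
        (⟨n, by omega⟩ : Fin (n + 2)).succAbove).det -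
    (A.submatrix (⟨n, by omega⟩ : Fin (n + 2)).succAbove (Fin.last (n + 1)).succAbove).det *
      (A.submatrix (Fin.last (n + 1)).succAbove (⟨n, by omega⟩ : Fin (n + 2)).succAbove).det =
    A.det * (A.submatrix (fun i : Fin n => (⟨(i : ℕ), by omega⟩ : Fin (n + 2)))
      (fun i : Fin n => (⟨(i : ℕ), by omega⟩ : Fin (n + 2)))).det := by
  classical
  set b : Fin (n + 2) := ⟨n, by omega⟩ with hb
  set a : Fin (n + 2) := Fin.last (n + 1) with ha
  have h := detQ n (A.submatrix (finSumFinEquiv (m := n) (n := 2))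
    (finSumFinEquiv (m := n) (n := 2)))
  rw [Matrix.det_submatrix_equiv_self, Matrix.adjugate_submatrix_equiv_self,
    Matrix.submatrix_submatrix] at h
  have e0 : finSumFinEquiv (Sum.inr (0 : Fin 2)) = b := by
    rw [finSumFinEquiv_apply_right]; ext; simp [hb]
  have e1 : finSumFinEquiv (Sum.inr (1 : Fin 2)) = a := by
    rw [finSumFinEquiv_apply_right]; ext; simp [ha]
  have einl : (finSumFinEquiv (m := n) (n := 2)) ∘ Sum.inl =
      fun i : Fin n => (⟨(i : ℕ), by omega⟩ : Fin (n + 2)) := by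
    funext i
    simp only [Function.comp_apply, finSumFinEquiv_apply_left]
    ext; simp
  simp only [Matrix.submatrix_apply, e0, e1, einl] at h
  -- h : A.det * (adj b b * adj a a - adj b a * adj a b) = A.det^2 * inner
  have hcanc : A.adjugate b b * A.adjugate a a - A.adjugate b a * A.adjugate a b =
      A.det * (A.submatrix (fun i : Fin n => (⟨(i : ℕ), by omega⟩ : Fin (n + 2)))
        (fun i : Fin n => (⟨(i : ℕ), by omega⟩ : Fin (n + 2)))).det := by
    apply mul_left_cancel₀ hA
    rw [h]; ring
  have hbb := Matrix.adjugate_fin_succ_eq_det_submatrix A b b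
  have haa := Matrix.adjugate_fin_succ_eq_det_submatrix A a a
  have hba := Matrix.adjugate_fin_succ_eq_det_submatrix A b a
  have hab := Matrix.adjugate_fin_succ_eq_det_submatrix A a b
  have hvb : (b : ℕ) = n := rfl
  have hva : (a : ℕ) = n + 1 := rfl
  rw [hbb, haa, hba, hab, hvb, hva] at hcanc
  have s1 : ((-1 : ℂ)) ^ (n + n) = 1 := Even.neg_one_pow ⟨n, rfl⟩
  have s2 : ((-1 : ℂ)) ^ (n + 1 + (n + 1)) = 1 := Even.neg_one_pow ⟨n + 1, rfl⟩
  have s3 : ((-1 : ℂ)) ^ (n + 1 + n) = -1 := Odd.neg_one_pow ⟨n, by ring⟩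
  have s4 : ((-1 : ℂ)) ^ (n + (n + 1)) = -1 := Odd.neg_one_pow ⟨n, by ring⟩
  rw [s1, s2, s3, s4] at hcanc
  linear_combination hcanc

/- ### Desnanot–Jacobi, general case, by density of invertible matrices -/

private lemma dj (n : ℕ) (A : Matrix (Fin (n + 2)) (Fin (n + 2)) ℂ) :
    (A.submatrix (Fin.last (n + 1)).succAbove (Fin.last (n + 1)).succAbove).det *
      (A.submatrix (⟨n, by omega⟩ : Fin (n + 2)).succAbove
        (⟨n, by omega⟩ : Fin (n + 2)).succAbove).det -
    (A.submatrix (⟨n, by omega⟩ : Fin (n + 2)).succAbove (Fin.last (n + 1)).succAbove).det *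
      (A.submatrix (Fin.last (n + 1)).succAbove (⟨n, by omega⟩ : Fin (n + 2)).succAbove).det =
    A.det * (A.submatrix (fun i : Fin n => (⟨(i : ℕ), by omega⟩ : Fin (n + 2)))
      (fun i : Fin n => (⟨(i : ℕ), by omega⟩ : Fin (n + 2)))).det := by
  classical
  set Φ : ℂ → Matrix (Fin (n + 2)) (Fin (n + 2)) ℂ := fun ε => A + ε • 1 with hΦ
  have hΦc : Continuous Φ := by
    apply continuous_const.add
    exact continuous_id.smul continuous_const
  set F : ℂ → ℂ := fun ε =>
    ((Φ ε).submatrix (Fin.last (n + 1)).succAbove (Fin.last (n + 1)).succAbove).det *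
      ((Φ ε).submatrix (⟨n, by omega⟩ : Fin (n + 2)).succAbove
        (⟨n, by omega⟩ : Fin (n + 2)).succAbove).det -
    ((Φ ε).submatrix (⟨n, by omega⟩ : Fin (n + 2)).succAbove (Fin.last (n + 1)).succAbove).det *
      ((Φ ε).submatrix (Fin.last (n + 1)).succAbove
        (⟨n, by omega⟩ : Fin (n + 2)).succAbove).det with hF
  set G : ℂ → ℂ := fun ε =>
    (Φ ε).det * ((Φ ε).submatrix (fun i : Fin n => (⟨(i : ℕ), by omega⟩ : Fin (n + 2)))
      (fun i : Fin n => (⟨(i : ℕ), by omega⟩ : Fin (n + 2)))).det with hG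
  have hFc : Continuous F := by
    apply Continuous.sub <;> apply Continuous.mul <;>
      exact (hΦc.matrix_submatrix _ _).matrix_det
  have hGc : Continuous G := by
    exact (hΦc.matrix_det).mul ((hΦc.matrix_submatrix _ _).matrix_det)
  set s : Set ℂ := {ε : ℂ | (Φ ε).det = 0} with hs
  have hsub : s ⊆ spectrum ℂ (-A) := by
    intro ε hε
    rw [spectrum.mem_iff]
    intro hu
    rw [Algebra.algebraMap_eq_smul_one, sub_neg_eq_add] at hu
    have : IsUnit (Φ ε) := by
      rw [hΦ]
      simpa [add_comm] using hu
    rw [Matrix.isUnit_iff_isUnit_det, isUnit_iff_ne_zero] at this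
    exact this hε
  have hdense : Dense sᶜ := by
    have := ((Matrix.finite_spectrum (-A)).countable).dense_compl ℂ
    exact this.mono (Set.compl_subset_compl.mpr hsub)
  have heq : Set.EqOn F G sᶜ := by
    intro ε hε
    exact dj_unit n (Φ ε) (by simpa [hs] using hε)
  have hFG : F = G := Continuous.ext_on hdense hFc hGc heq
  have h0 := congrFun hFG 0
  simp only [hF, hG, hΦ, zero_smul, add_zero] at h0
  exact h0

/- ### Derivative of a Wronskian -/

set_option maxHeartbeats 1000000 in
private lemma wr_hasDerivAt (m : ℕ) (g : Fin (m + 1) → ℝ → ℂ)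
    (hg : ∀ j, ContDiff ℝ (⊤ : ℕ∞) (g j)) (x : ℝ) :
    HasDerivAt (wrFun (m + 1) g)
      ((Matrix.of fun i j : Fin (m + 1) =>
        iteratedDeriv (if i = Fin.last m then m + 1 else (i : ℕ)) (g j) x).det) x := by
  classical
  have hD : ∀ (k : ℕ) (j : Fin (m + 1)),
      HasDerivAt (fun t => iteratedDeriv k (g j) t) (iteratedDeriv (k + 1) (g j) x) x := by
    intro k j
    have hTopSm : ContDiff ℝ ((⊤ : ℕ∞) : WithTop ℕ∞) (g j) := (hg j).of_le (by simp)
    have hDiff : Differentiable ℝ (iteratedDeriv k (g j)) :=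
      (contDiff_iff_iteratedDeriv.mp hTopSm).2 k (lt_top_iff_ne_top.mpr (WithTop.coe_ne_top))
    rw [iteratedDeriv_succ]
    exact (hDiff x).hasDerivAt
  have hdet : ∀ (M : Matrix (Fin (m + 1)) (Fin (m + 1)) ℂ),
      M.det = ∑ σ : Equiv.Perm (Fin (m + 1)),
        ((Equiv.Perm.sign σ : ℤ) : ℂ) * ∏ i, M i (σ i) := by
    intro M
    conv_lhs => rw [← Matrix.det_transpose M, Matrix.det_apply']
    simp [Matrix.transpose_apply]
  have hfun : wrFun (m + 1) g = fun t => ∑ σ : Equiv.Perm (Fin (m + 1)),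
      ((Equiv.Perm.sign σ : ℤ) : ℂ) * ∏ i : Fin (m + 1), iteratedDeriv (i : ℕ) (g (σ i)) t := by
    funext t
    simp only [wrFun]
    rw [hdet]
    simp only [Matrix.of_apply]
  have hσ : ∀ σ : Equiv.Perm (Fin (m + 1)),
      HasDerivAt (fun t => ((Equiv.Perm.sign σ : ℤ) : ℂ) *
          ∏ i : Fin (m + 1), iteratedDeriv (i : ℕ) (g (σ i)) t)
        (((Equiv.Perm.sign σ : ℤ) : ℂ) *
          (∑ i : Fin (m + 1), (∏ j ∈ Finset.univ.erase i, iteratedDeriv (j : ℕ) (g (σ j)) x) •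
            iteratedDeriv ((i : ℕ) + 1) (g (σ i)) x)) x := by
    intro σ
    have hp : HasDerivAt (fun t => ∏ i : Fin (m + 1), iteratedDeriv (i : ℕ) (g (σ i)) t)
        (∑ i : Fin (m + 1), (∏ j ∈ Finset.univ.erase i, iteratedDeriv (j : ℕ) (g (σ j)) x) •
          iteratedDeriv ((i : ℕ) + 1) (g (σ i)) x) x :=
      HasDerivAt.fun_finsetProd (fun i _ => hD (i : ℕ) (σ i))
    exact hp.const_mul _
  have key : HasDerivAt (wrFun (m + 1) g)
      (∑ σ : Equiv.Perm (Fin (m + 1)), ((Equiv.Perm.sign σ : ℤ) : ℂ) *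
        (∑ i : Fin (m + 1), (∏ j ∈ Finset.univ.erase i, iteratedDeriv (j : ℕ) (g (σ j)) x) •
          iteratedDeriv ((i : ℕ) + 1) (g (σ i)) x)) x := by
    rw [hfun]
    exact HasDerivAt.fun_sum fun σ _ => hσ σ
  -- identify the derivative value
  set N : Fin (m + 1) → Matrix (Fin (m + 1)) (Fin (m + 1)) ℂ := fun i =>
    Matrix.of fun k j => iteratedDeriv (if k = i then (k : ℕ) + 1 else (k : ℕ)) (g j) x with hN
  have hval : (∑ σ : Equiv.Perm (Fin (m + 1)), ((Equiv.Perm.sign σ : ℤ) : ℂ) *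
        (∑ i : Fin (m + 1), (∏ j ∈ Finset.univ.erase i, iteratedDeriv (j : ℕ) (g (σ j)) x) •
          iteratedDeriv ((i : ℕ) + 1) (g (σ i)) x)) =
      ∑ i : Fin (m + 1), (N i).det := by
    have step : ∀ (σ : Equiv.Perm (Fin (m + 1))) (i : Fin (m + 1)),
        (∏ j ∈ Finset.univ.erase i, iteratedDeriv (j : ℕ) (g (σ j)) x) •
          iteratedDeriv ((i : ℕ) + 1) (g (σ i)) x = ∏ j, (N i) j (σ j) := by
      intro σ i
      rw [smul_eq_mul, ← Finset.mul_prod_erase Finset.univ _ (Finset.mem_univ i)]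
      have h1 : (N i) i (σ i) = iteratedDeriv ((i : ℕ) + 1) (g (σ i)) x := by
        simp [hN]
      have h2 : ∀ j ∈ Finset.univ.erase i, (N i) j (σ j) =
          iteratedDeriv (j : ℕ) (g (σ j)) x := by
        intro j hj
        have : j ≠ i := Finset.ne_of_mem_erase hj
        simp [hN, this]
      rw [h1, Finset.prod_congr rfl h2, mul_comm]
    calc (∑ σ : Equiv.Perm (Fin (m + 1)), ((Equiv.Perm.sign σ : ℤ) : ℂ) *
          (∑ i : Fin (m + 1), (∏ j ∈ Finset.univ.erase i,
            iteratedDeriv (j : ℕ) (g (σ j)) x) • iteratedDeriv ((i : ℕ) + 1) (g (σ i)) x))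
        = ∑ σ : Equiv.Perm (Fin (m + 1)), ∑ i : Fin (m + 1),
            ((Equiv.Perm.sign σ : ℤ) : ℂ) * ∏ j, (N i) j (σ j) := by
          apply Finset.sum_congr rfl
          intro σ _
          rw [Finset.mul_sum]
          apply Finset.sum_congr rfl
          intro i _
          rw [step σ i]
      _ = ∑ i : Fin (m + 1), ∑ σ : Equiv.Perm (Fin (m + 1)),
            ((Equiv.Perm.sign σ : ℤ) : ℂ) * ∏ j, (N i) j (σ j) := Finset.sum_comm
      _ = ∑ i : Fin (m + 1), (N i).det := by
          apply Finset.sum_congr rfl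
          intro i _
          rw [hdet (N i)]
  have hzero : ∀ i : Fin (m + 1), i ≠ Fin.last m → (N i).det = 0 := by
    intro i hi
    have hlt : (i : ℕ) < m := by
      have := i.isLt
      have : (i : ℕ) ≠ m := fun h => hi (Fin.ext h)
      omega
    set i' : Fin (m + 1) := ⟨(i : ℕ) + 1, by omega⟩ with hi'
    have hne : i ≠ i' := by
      intro h
      have := congrArg Fin.val h
      simp [hi'] at this
    apply Matrix.det_zero_of_row_eq hne
    funext j
    have h1 : (N i) i j = iteratedDeriv ((i : ℕ) + 1) (g j) x := by simp [hN]
    have h2 : (N i) i' j = iteratedDeriv ((i : ℕ) + 1) (g j) x := by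
      have : i' ≠ i := fun h => hne h.symm
      simp [hN, this, hi', Fin.ext_iff]
    rw [h1, h2]
  have hsum : ∑ i : Fin (m + 1), (N i).det = (N (Fin.last m)).det := by
    apply Fintype.sum_eq_single
    intro i hi
    exact hzero i hi
  have hlast : N (Fin.last m) = Matrix.of fun i j : Fin (m + 1) =>
      iteratedDeriv (if i = Fin.last m then m + 1 else (i : ℕ)) (g j) x := by
    ext i j
    by_cases hi : i = Fin.last m
    · subst hi; simp [hN]
    · simp [hN, hi]
  rw [hval, hsum, hlast] at key
  exact key

/- ### Assembly -/

/-- **Crum's identity** (Desnanot–Jacobi identity for Wronskians): for smooth functions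
`q_1, …, q_m, f : ℝ → ℂ` (with `m = M + 1 ≥ 1`),
`W(q_1,…,q_m) · (W(q_1,…,q_{m-1},f))' - (W(q_1,…,q_m))' · W(q_1,…,q_{m-1},f)
  = W(q_1,…,q_{m-1}) · W(q_1,…,q_m,f)`. -/
theorem crum_wronskian_identity (M : ℕ) (q : Fin (M + 1) → ℝ → ℂ) (f : ℝ → ℂ)
    (hq : ∀ i, ContDiff ℝ (⊤ : ℕ∞) (q i)) (hf : ContDiff ℝ (⊤ : ℕ∞) f) (x : ℝ) :
    wrFun (M + 1) q x * deriv (wrFun (M + 1) (Function.update q (Fin.last M) f)) x -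
      deriv (wrFun (M + 1) q) x * wrFun (M + 1) (Function.update q (Fin.last M) f) x =
    wrFun M (fun i : Fin M => q i.castSucc) x * wrFun (M + 2) (Fin.snoc q f) x := by
  classical
  set g2 : Fin (M + 2) → ℝ → ℂ := Fin.snoc q f with hg2
  set A : Matrix (Fin (M + 2)) (Fin (M + 2)) ℂ :=
    Matrix.of fun i j : Fin (M + 2) => iteratedDeriv (i : ℕ) (g2 j) x with hA
  set b : Fin (M + 2) := ⟨M, by omega⟩ with hb
  set a : Fin (M + 2) := Fin.last (M + 1) with ha
  -- column helpers
  have hcol_a : ∀ j : Fin (M + 1), g2 (a.succAbove j) = q j := by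
    intro j
    rw [ha, hg2, Fin.succAbove_last]
    simp
  have hcol_b : ∀ j : Fin (M + 1),
      g2 (b.succAbove j) = Function.update q (Fin.last M) f j := by
    intro j
    by_cases hj : j = Fin.last M
    · subst hj
      have h1 : b.succAbove (Fin.last M) = Fin.last (M + 1) := by
        simp [hb, Fin.succAbove, Fin.lt_def, Fin.ext_iff]
      rw [h1, hg2]
      simp [Fin.snoc_last]
    · have hlt : (j : ℕ) < M := by
        have h1 : (j : ℕ) ≠ M := fun h => hj (Fin.ext h)
        have := j.isLt; omega
      have h1 : b.succAbove j = Fin.castSucc j := by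
        simp [hb, Fin.succAbove, Fin.lt_def, hlt]
      rw [h1, hg2, Fin.snoc_castSucc]
      simp [Function.update, hj]
  -- row helper
  have hrow_b : ∀ i : Fin (M + 1),
      ((b.succAbove i : Fin (M + 2)) : ℕ) = if i = Fin.last M then M + 1 else (i : ℕ) := by
    intro i
    by_cases hi : i = Fin.last M
    · subst hi
      simp [hb, Fin.succAbove, Fin.lt_def]
    · have hlt : (i : ℕ) < M := by
        have h1 : (i : ℕ) ≠ M := fun h => hi (Fin.ext h)
        have := i.isLt; omega
      simp [hb, Fin.succAbove, Fin.lt_def, hlt, hi]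
  have hrow_a : ∀ i : Fin (M + 1), ((a.succAbove i : Fin (M + 2)) : ℕ) = (i : ℕ) := by
    intro i
    rw [ha, Fin.succAbove_last]
    rfl
  -- smoothness of updated family
  have hq' : ∀ i, ContDiff ℝ (⊤ : ℕ∞) (Function.update q (Fin.last M) f i) := by
    intro i
    by_cases hi : i = Fin.last M
    · subst hi; simpa using hf
    · simpa [Function.update, hi] using hq i
  -- the six identifications
  have e1 : wrFun (M + 1) q x = (A.submatrix a.succAbove a.succAbove).det := by
    simp only [wrFun]
    congr 1
    ext i j
    simp only [Matrix.of_apply, Matrix.submatrix_apply, hA, hcol_a, hrow_a]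
  have e2 : wrFun (M + 1) (Function.update q (Fin.last M) f) x =
      (A.submatrix a.succAbove b.succAbove).det := by
    simp only [wrFun]
    congr 1
    ext i j
    simp only [Matrix.of_apply, Matrix.submatrix_apply, hA, hcol_b, hrow_a]
  have e3 : deriv (wrFun (M + 1) q) x = (A.submatrix b.succAbove a.succAbove).det := by
    rw [(wr_hasDerivAt M q hq x).deriv]
    congr 1
    ext i j
    simp only [Matrix.of_apply, Matrix.submatrix_apply, hA, hcol_a, hrow_b]
  have e4 : deriv (wrFun (M + 1) (Function.update q (Fin.last M) f)) x =
      (A.submatrix b.succAbove b.succAbove).det := by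
    rw [(wr_hasDerivAt M _ hq' x).deriv]
    congr 1
    ext i j
    simp only [Matrix.of_apply, Matrix.submatrix_apply, hA, hcol_b, hrow_b]
  have e5 : wrFun M (fun i : Fin M => q i.castSucc) x =
      (A.submatrix (fun i : Fin M => (⟨(i : ℕ), by omega⟩ : Fin (M + 2)))
        (fun i : Fin M => (⟨(i : ℕ), by omega⟩ : Fin (M + 2)))).det := by
    simp only [wrFun]
    congr 1
    ext i j
    have hcol : g2 (⟨(j : ℕ), by omega⟩ : Fin (M + 2)) = q j.castSucc := by
      have h1 : (⟨(j : ℕ), by omega⟩ : Fin (M + 2)) = Fin.castSucc j.castSucc := by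
        ext; simp
      rw [h1, hg2, Fin.snoc_castSucc]
    simp only [Matrix.of_apply, Matrix.submatrix_apply, hA, hcol]
  have e6 : wrFun (M + 2) g2 x = A.det := by rw [hA]; rfl
  rw [e1, e2, e3, e4, e5, e6]
  have hdj := dj M A
  rw [← hb, ← ha] at hdj
  linear_combination hdj
end

section
/- Let π be a permutation of {1, …, n} and let 0 ≤ m ≤ n be such that π(1) < π(2) < … < π(m). Then the total number of inversions of π satisfies inv(π) = Σ_{j = m+1}^{n} ( j − π(j) + |{ i : i > j and π(i) < π(j) }| ). -/
/-!
An inversion `(i, j)` is counted at its larger position `j`, where `j` has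
`j - π j + #{i > j | π i < π j}` inversions to its left: of the `j` positions before it and the
`π j` positions mapped below `π j`, the common ones are exactly the non-inversions to its left.
No inversion is counted at a position of the increasing prefix, leaving the sum over `j ≥ m`.
-/

open Finset Function

theorem card_filter_prod_eq_sum_card_filter {α : Type*} [Fintype α] (r : α → α → Prop)
    [DecidableRel r] : #{p : α × α | r p.1 p.2} = ∑ j, #{i | r i j} := by
  simp only [card_filter, Fintype.sum_prod_type_right]

theorem Function.Injective.card_filter_lt_and_gt_add_card_filter_lt {α β : Type*} [Fintype α]
    [LinearOrder α] [LinearOrder β] {f : α → β} (hf : Injective f) (j : α) :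
    #{i | i < j ∧ f j < f i} + #{i | f i < f j} = #{i | i < j} + #{i | j < i ∧ f i < f j} := by
  simp only [card_filter, ← sum_add_distrib]
  refine sum_congr rfl fun i _ => ?_
  rcases lt_trichotomy i j with hij | rfl | hij
  · rcases (hf.ne hij.ne).lt_or_gt with h | h <;> simp [hij, hij.le, h, h.not_gt]
  · simp
  · simp [hij, hij.not_gt]

theorem Equiv.Perm.card_filter_apply_lt_apply {n : ℕ} (π : Perm (Fin n)) (j : Fin n) :
    #{i | π i < π j} = π j := by
  rw [← Fin.card_Iio (π j)]
  exact card_equiv π (by simp)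

theorem Equiv.Perm.card_left_inversions_add_apply {n : ℕ} (π : Perm (Fin n)) (j : Fin n) :
    #{i | i < j ∧ π j < π i} + π j = j + #{i | j < i ∧ π i < π j} := by
  have h := π.injective.card_filter_lt_and_gt_add_card_filter_lt j
  rwa [π.card_filter_apply_lt_apply, filter_gt_eq_Iio, Fin.card_Iio] at h

theorem inversions_eq_sum_general (n : ℕ) (π : Equiv.Perm (Fin n)) (m : ℕ)
    (hmono : ∀ i j : Fin n, (i : ℕ) < m → (j : ℕ) < m → i < j → π i < π j) :
    ((Finset.univ.filter fun p : Fin n × Fin n => p.1 < p.2 ∧ π p.2 < π p.1).card : ℤ) =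
      ∑ j ∈ Finset.univ.filter (fun j : Fin n => m ≤ (j : ℕ)),
        ((j : ℤ) - ((π j : ℕ) : ℤ) +
          ((Finset.univ.filter fun i : Fin n => j < i ∧ π i < π j).card : ℤ)) := by
  have prefix_free : ∀ j ∈ univ.filter (fun j : Fin n => ¬m ≤ (j : ℕ)),
      #{i | i < j ∧ π j < π i} = 0 := by
    intro j hj
    rw [mem_filter, not_le] at hj
    refine card_eq_zero.2 (filter_eq_empty_iff.2 fun i _ ⟨hij, hinv⟩ => ?_)
    exact hinv.not_gt (hmono i j ((Fin.lt_def.1 hij).trans hj.2) hj.2 hij)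
  rw [card_filter_prod_eq_sum_card_filter (fun i j => i < j ∧ π j < π i),
    ← sum_filter_add_sum_filter_not univ (fun j : Fin n => m ≤ (j : ℕ)),
    sum_eq_zero prefix_free, add_zero, Nat.cast_sum]
  refine sum_congr rfl fun j _ => ?_
  have h := π.card_left_inversions_add_apply j
  omega

/-- If `π(1) < π(2) < … < π(m)` (0-based: `π` is strictly increasing on indices `< m`), then
the number of inversions of `π` is `∑_{j=m+1}^{n} (j - π j + #{i > j : π i < π j})`
(0-based: the sum over `j` with `m ≤ j`). -/
theorem inversions_eq_sum (n : ℕ) (π : Equiv.Perm (Fin n)) (m : ℕ) (hm : m ≤ n)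
    (hmono : ∀ i j : Fin n, (i : ℕ) < m → (j : ℕ) < m → i < j → π i < π j) :
    ((Finset.univ.filter fun p : Fin n × Fin n => p.1 < p.2 ∧ π p.2 < π p.1).card : ℤ) =
      ∑ j ∈ Finset.univ.filter (fun j : Fin n => m ≤ (j : ℕ)),
        ((j : ℤ) - ((π j : ℕ) : ℤ) +
          ((Finset.univ.filter fun i : Fin n => j < i ∧ π i < π j).card : ℤ)) :=
  inversions_eq_sum_general n π m hmono
end

section
/- Stable decreasing sort counts strictly increasing pairs: Let k_1, …, k_n ∈ ℤ and let π be a permutation of {1, …, n} such that k_{π(1)} ≥ k_{π(2)} ≥ … ≥ k_{π(n)} and such that whenever i < j and k_{π(i)} = k_{π(j)} one has π(i) < π(j). Then inv(π) = |{ (a, b) : 1 ≤ a < b ≤ n and k_a < k_b }|. -/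
/-!
The map `(i, j) ↦ (π j, π i)` is a bijection from the inversions of `π` onto the pairs
`a < b` with `k a < k b`: since `k ∘ π` is antitone, an inverted pair `i < j` has
`k (π j) ≤ k (π i)`, and stability rules out equality.
-/

section

variable {ι α : Type*} [LinearOrder ι] [PartialOrder α] {k : ι → α} {π : Equiv.Perm ι}

theorem inversion_iff_lt_of_antitone_of_stable (hsort : Antitone fun i => k (π i))
    (hstable : ∀ i j : ι, i < j → k (π i) = k (π j) → π i < π j) (i j : ι) :
    i < j ∧ π j < π i ↔ π j < π i ∧ k (π j) < k (π i) := by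
  constructor
  · rintro ⟨hij, hπ⟩
    refine ⟨hπ, (hsort hij.le).lt_of_ne fun heq => ?_⟩
    exact (hstable i j hij heq.symm).not_gt hπ
  · rintro ⟨hπ, hk⟩
    refine ⟨lt_of_not_ge fun hji => ?_, hπ⟩
    exact (hsort hji).not_gt hk

end

/-- A stable decreasing sort counts strictly increasing pairs: if `π` sorts `k` in weakly
decreasing order and is stable (equal values keep their relative order), then the number of
inversions of `π` equals the number of pairs `a < b` with `k a < k b`. -/
theorem stable_sort_inversions (n : ℕ) (k : Fin n → ℤ) (π : Equiv.Perm (Fin n))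
    (hsort : Antitone fun i => k (π i))
    (hstable : ∀ i j : Fin n, i < j → k (π i) = k (π j) → π i < π j) :
    (Finset.univ.filter fun p : Fin n × Fin n => p.1 < p.2 ∧ π p.2 < π p.1).card =
      (Finset.univ.filter fun p : Fin n × Fin n => p.1 < p.2 ∧ k p.1 < k p.2).card :=
  Finset.card_equiv ((Equiv.prodComm _ _).trans (π.prodCongr π)) fun p => by
    simpa using inversion_iff_lt_of_antitone_of_stable hsort hstable p.1 p.2
end
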